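/- arXiv:1410.5231 — 3 statements merged into one kernel-verified Lean document; each statement's English description precedes it below -/
import Mathlib

section
/- If π : ℕ* → [0,1] is a probability distribution on the positive integers (∑ π_m = 1) and 0 < p ≤ p' are real numbers, then the p'-impatience is bounded by (p'/p) times the p-impatience: ∑_{m≥1} |π_{m+1}^{p'} − π_m^{p'}| ≤ (p'/p) · ∑_{m≥1} |π_{m+1}^p − π_m^p|. -/
/-!
Since `π_m ≤ 1`, the numbers `q_m = π_m ^ p` lie in `[0, 1]` and `π_m ^ p' = q_m ^ (p' / p)`.
The bound then holds term by term, because `z ↦ z ^ r` is `r`-Lipschitz on `[0, 1]` for `r ≥ 1`.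
-/

open Set

lemma Real.abs_rpow_sub_rpow_le_mul_abs_sub {x y r : ℝ} (hx : x ∈ Icc (0 : ℝ) 1)
    (hy : y ∈ Icc (0 : ℝ) 1) (hr : 1 ≤ r) : |x ^ r - y ^ r| ≤ r * |x - y| := by
  have hderiv : ∀ z ∈ Icc (0 : ℝ) 1,
      HasDerivWithinAt (fun z : ℝ => z ^ r) (r * z ^ (r - 1)) (Icc 0 1) z :=
    fun z _ => (Real.hasDerivAt_rpow_const (Or.inr hr)).hasDerivWithinAt
  have hbound : ∀ z ∈ Icc (0 : ℝ) 1, ‖r * z ^ (r - 1)‖ ≤ r := fun z ⟨hz0, hz1⟩ => by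
    rw [Real.norm_of_nonneg (by positivity)]
    exact mul_le_of_le_one_right (by linarith) (Real.rpow_le_one hz0 hz1 (by linarith))
  simpa only [Real.norm_eq_abs] using
    (convex_Icc (0 : ℝ) 1).norm_image_sub_le_of_norm_hasDerivWithin_le hderiv hbound hy hx

lemma ENNReal.tsum_ofReal_le_ofReal_mul_tsum_ofReal {ι : Type*} {f g : ι → ℝ} {c : ℝ}
    (hc : 0 ≤ c) (hfg : ∀ i, f i ≤ c * g i) :
    ∑' i, ENNReal.ofReal (f i) ≤ ENNReal.ofReal c * ∑' i, ENNReal.ofReal (g i) :=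
  calc ∑' i, ENNReal.ofReal (f i)
      ≤ ∑' i, ENNReal.ofReal (c * g i) :=
        ENNReal.tsum_le_tsum fun i => ENNReal.ofReal_le_ofReal (hfg i)
    _ = ENNReal.ofReal c * ∑' i, ENNReal.ofReal (g i) := by
        simp only [ENNReal.ofReal_mul hc, ENNReal.tsum_mul_left]

/-- `π : ℕ → ℝ`, with `π m` standing for the weight of stage `m+1`, is a probability
distribution on the positive integers.  For `0 < p ≤ p'`, the `p'`-impatience
`∑ |π_{m+1}^{p'} - π_m^{p'}|` (computed in `ℝ≥0∞` since it may be infinite) is at most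
`(p'/p)` times the `p`-impatience. -/
theorem impatience_le_of_le (π : ℕ → ℝ) (hpos : ∀ m, 0 ≤ π m) (hsum : HasSum π 1)
    (p p' : ℝ) (hp : 0 < p) (hpp' : p ≤ p') :
    (∑' m : ℕ, ENNReal.ofReal |π (m + 1) ^ p' - π m ^ p'|) ≤
      ENNReal.ofReal (p' / p) * ∑' m : ℕ, ENNReal.ofReal |π (m + 1) ^ p - π m ^ p| := by
  have hr : 1 ≤ p' / p := (one_le_div hp).2 hpp'
  have hpow_mem : ∀ m, π m ^ p ∈ Icc (0 : ℝ) 1 := fun m =>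
    ⟨Real.rpow_nonneg (hpos m) p,
      Real.rpow_le_one (hpos m) (le_hasSum hsum m fun j _ => hpos j) hp.le⟩
  have hpow_eq : ∀ m, π m ^ p' = (π m ^ p) ^ (p' / p) := fun m => by
    rw [← Real.rpow_mul (hpos m), mul_div_cancel₀ _ hp.ne']
  refine ENNReal.tsum_ofReal_le_ofReal_mul_tsum_ofReal (by linarith) fun m => ?_
  rw [hpow_eq, hpow_eq]
  exact Real.abs_rpow_sub_rpow_le_mul_abs_sub (hpow_mem _) (hpow_mem _) hr
end

section
/- Let π be a probability distribution on ℕ*, s > 0, ε ∈ (0,1), and suppose N_0 ≥ 1 is such that ∑_{m≥r} π_m ≥ ε for all r ∈ {1,…,N_0+1}. Define λ_r := π_{r+1}/∑_{m≥r+1} π_m for 0 ≤ r ≤ N_0. Then ∑_{r=1}^{N_0} |λ_r^s − λ_{r−1}^s| ≤ ε^{−s} I_s(π) + s·ε^{−1−s}·(sup_{m≥1} π_m)^s, where I_s(π) := ∑_{m≥1}|π_{m+1}^s − π_m^s|. -/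
/-!
With `T r = ∑_{m ≥ r} π m` one has `T (r - 1) = π (r - 1) + T r`, so each increment of `λ^s`
splits into a change of the numerator `π^s` at the fixed denominator `T r ≥ ε`, costing at most
`ε^{-s} |π r ^ s - π (r - 1) ^ s|`, and a change of the denominator by `π (r - 1)`, which by the
mean value theorem for `x ↦ x^{-s}` costs at most `s ε^{-1-s} π (r - 1) ^ s · π (r - 1)`.
Summing over `r`, the masses `π (r - 1)` add up to at most `1`.
-/

open Finset

lemma Finset.sum_Icc_one_eq_sum_range_succ {M : Type*} [AddCommMonoid M] (f : ℕ → M) (N : ℕ) :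
    ∑ r ∈ Icc 1 N, f r = ∑ k ∈ range N, f (k + 1) := by
  rw [← Ico_add_one_right_eq_Icc, sum_Ico_eq_sum_range]
  simp [add_comm]

lemma Summable.tsum_nat_add_eq_add {G : Type*} [AddCommGroup G] [TopologicalSpace G]
    [IsTopologicalAddGroup G] [T2Space G] {f : ℕ → G} (hf : Summable f) (k : ℕ) :
    ∑' n, f (n + k) = f k + ∑' n, f (n + (k + 1)) := by
  rw [((summable_nat_add_iff k).mpr hf).tsum_eq_zero_add, zero_add]
  simp only [add_right_comm _ 1 k, add_assoc]

namespace Real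

lemma one_sub_mul_sub_one_le_rpow_neg {t s : ℝ} (ht : 0 < t) (hs : 0 ≤ s) :
    1 - s * (t - 1) ≤ t ^ (-s) :=
  calc 1 - s * (t - 1) ≤ 1 - s * log t := by gcongr; exact log_le_sub_one_of_pos ht
    _ ≤ exp (log t * -s) := by linarith [add_one_le_exp (log t * -s)]
    _ = t ^ (-s) := (rpow_def_of_pos ht _).symm

lemma rpow_neg_sub_rpow_neg_le {a b s : ℝ} (ha : 0 < a) (hab : a ≤ b) (hs : 0 ≤ s) :
    a ^ (-s) - b ^ (-s) ≤ s * a ^ (-1 - s) * (b - a) := by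
  have hb : b ^ (-s) = a ^ (-s) * (b / a) ^ (-s) := by
    rw [← mul_rpow ha.le (div_pos (ha.trans_le hab) ha).le, mul_div_cancel₀ _ ha.ne']
  have ha' : a ^ (-1 - s) = a ^ (-s) / a := by
    rw [sub_eq_add_neg, rpow_add ha, rpow_neg_one, inv_mul_eq_div]
  have bernoulli := mul_le_mul_of_nonneg_left
    (one_sub_mul_sub_one_le_rpow_neg (div_pos (ha.trans_le hab) ha) hs) (rpow_nonneg ha.le (-s))
  rw [hb, ha']
  calc a ^ (-s) - a ^ (-s) * (b / a) ^ (-s) ≤ a ^ (-s) - a ^ (-s) * (1 - s * (b / a - 1)) := by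
        linarith
    _ = s * (a ^ (-s) / a) * (b - a) := by field_simp; ring

/-- The numerator and the denominator are varied one at a time, the denominator by the mean
value bound above. -/
lemma abs_div_rpow_sub_div_add_rpow_le {a b T ε s : ℝ} (ha : 0 ≤ a) (hb : 0 ≤ b) (hε : 0 < ε)
    (hεT : ε ≤ T) (hs : 0 ≤ s) :
    |(a / T) ^ s - (b / (b + T)) ^ s| ≤
      ε ^ (-s) * |a ^ s - b ^ s| + s * ε ^ (-1 - s) * b ^ s * b := by
  have hT : 0 < T := hε.trans_le hεT
  have hTb : T ≤ b + T := le_add_of_nonneg_left hb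
  rw [div_rpow ha hT.le, div_rpow hb (by positivity), div_eq_mul_inv, div_eq_mul_inv,
    ← rpow_neg hT.le, ← rpow_neg (by positivity)]
  have hdiff : T ^ (-s) - (b + T) ^ (-s) ≤ s * ε ^ (-1 - s) * b := by
    calc T ^ (-s) - (b + T) ^ (-s) ≤ s * T ^ (-1 - s) * (b + T - T) :=
          rpow_neg_sub_rpow_neg_le hT hTb hs
      _ ≤ s * ε ^ (-1 - s) * b := by
          rw [add_sub_cancel_right]
          have := rpow_le_rpow_of_nonpos hε hεT (by linarith : -1 - s ≤ 0)
          gcongr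
  have hmono : (b + T) ^ (-s) ≤ T ^ (-s) := rpow_le_rpow_of_nonpos hT hTb (by linarith)
  have hTε : T ^ (-s) ≤ ε ^ (-s) := rpow_le_rpow_of_nonpos hε hεT (by linarith)
  have hbs : 0 ≤ b ^ s := rpow_nonneg hb s
  calc |a ^ s * T ^ (-s) - b ^ s * (b + T) ^ (-s)|
      = |(a ^ s - b ^ s) * T ^ (-s) + b ^ s * (T ^ (-s) - (b + T) ^ (-s))| := by ring_nf
    _ ≤ |a ^ s - b ^ s| * T ^ (-s) + b ^ s * (T ^ (-s) - (b + T) ^ (-s)) := by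
        refine (abs_add_le _ _).trans_eq ?_
        rw [abs_mul, abs_mul, abs_of_nonneg (rpow_nonneg hT.le _), abs_of_nonneg hbs,
          abs_of_nonneg (sub_nonneg.mpr hmono)]
    _ ≤ ε ^ (-s) * |a ^ s - b ^ s| + b ^ s * (s * ε ^ (-1 - s) * b) :=
        add_le_add ((mul_comm _ _).trans_le (mul_le_mul_of_nonneg_right hTε (abs_nonneg _)))
          (mul_le_mul_of_nonneg_left hdiff hbs)
    _ = ε ^ (-s) * |a ^ s - b ^ s| + s * ε ^ (-1 - s) * b ^ s * b := by ring

end Real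

theorem variation_of_normalized_weights_le_general (π : ℕ → ℝ) (hpos : ∀ m, 0 ≤ π m)
    (hsum : HasSum π 1) (s : ℝ) (hs : 0 < s) (ε : ℝ) (hε0 : 0 < ε)
    (N₀ : ℕ) (htail : ∀ r ≤ N₀, ε ≤ ∑' n : ℕ, π (n + r)) :
    ENNReal.ofReal (∑ r ∈ Finset.Icc 1 N₀,
        |(π r / ∑' n : ℕ, π (n + r)) ^ s - (π (r - 1) / ∑' n : ℕ, π (n + (r - 1))) ^ s|) ≤
      ENNReal.ofReal (ε ^ (-s)) * (∑' m : ℕ, ENNReal.ofReal |π (m + 1) ^ s - π m ^ s|) +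
        ENNReal.ofReal (s * ε ^ (-1 - s) * (⨆ m : ℕ, π m) ^ s) := by
  set S := ⨆ m : ℕ, π m
  have hπS : ∀ m, π m ≤ S := le_ciSup ⟨1, by
    rintro _ ⟨m, rfl⟩
    exact le_hasSum hsum m fun n _ => hpos n⟩
  have hK : 0 ≤ s * ε ^ (-1 - s) * S ^ s :=
    mul_nonneg (mul_nonneg hs.le (Real.rpow_nonneg hε0.le _))
      (Real.rpow_nonneg ((hpos 0).trans (hπS 0)) _)
  have hterm : ∀ k ∈ range N₀,
      |(π (k + 1) / ∑' n, π (n + (k + 1))) ^ s - (π k / ∑' n, π (n + k)) ^ s| ≤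
        ε ^ (-s) * |π (k + 1) ^ s - π k ^ s| + s * ε ^ (-1 - s) * S ^ s * π k := by
    intro k hk
    rw [hsum.summable.tsum_nat_add_eq_add k]
    refine (Real.abs_div_rpow_sub_div_add_rpow_le (hpos _) (hpos _) hε0
      (htail _ (mem_range.mp hk)) hs.le).trans ?_
    have hπk := hpos k
    have hπkS := Real.rpow_le_rpow hπk (hπS k) hs.le
    gcongr
  have hmass : ∑ k ∈ range N₀, π k ≤ 1 := sum_le_hasSum _ (fun i _ => hpos i) hsum
  rw [sum_Icc_one_eq_sum_range_succ]
  simp only [Nat.add_sub_cancel]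
  calc ENNReal.ofReal (∑ k ∈ range N₀,
        |(π (k + 1) / ∑' n, π (n + (k + 1))) ^ s - (π k / ∑' n, π (n + k)) ^ s|)
      ≤ ENNReal.ofReal (ε ^ (-s) * ∑ k ∈ range N₀, |π (k + 1) ^ s - π k ^ s| +
          s * ε ^ (-1 - s) * S ^ s * ∑ k ∈ range N₀, π k) := by
        gcongr
        rw [mul_sum, mul_sum, ← sum_add_distrib]
        exact sum_le_sum hterm
    _ ≤ ENNReal.ofReal (ε ^ (-s) * ∑ k ∈ range N₀, |π (k + 1) ^ s - π k ^ s|) +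
          ENNReal.ofReal (s * ε ^ (-1 - s) * S ^ s) :=
        ENNReal.ofReal_add_le.trans
          (add_le_add_right (ENNReal.ofReal_le_ofReal (mul_le_of_le_one_right hK hmass)) _)
    _ ≤ _ := by
        rw [ENNReal.ofReal_mul (Real.rpow_nonneg hε0.le _),
          ENNReal.ofReal_sum_of_nonneg fun k _ => abs_nonneg _]
        gcongr
        exact ENNReal.sum_le_tsum _

/-- Bound on the variation of the normalized discount factors (proof of Theorem 2.7).
With `π m` the weight of stage `m+1`, tail sums `T r := ∑' n, π (n + r)` and
`λ_r := π_{r+1}/T_r`, if `T r ≥ ε` for all `r ≤ N₀`, then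
`∑_{r=1}^{N₀} |λ_r^s - λ_{r-1}^s| ≤ ε^{-s} I_s(π) + s ε^{-1-s} (sup_m π_m)^s`,
the impatience `I_s(π) = ∑_{m≥1} |π_{m+1}^s - π_m^s|` being computed in `ℝ≥0∞`. -/
theorem variation_of_normalized_weights_le (π : ℕ → ℝ) (hpos : ∀ m, 0 ≤ π m)
    (hsum : HasSum π 1) (s : ℝ) (hs : 0 < s) (ε : ℝ) (hε0 : 0 < ε) (hε1 : ε < 1)
    (N₀ : ℕ) (hN₀ : 1 ≤ N₀) (htail : ∀ r ≤ N₀, ε ≤ ∑' n : ℕ, π (n + r)) :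
    ENNReal.ofReal (∑ r ∈ Finset.Icc 1 N₀,
        |(π r / ∑' n : ℕ, π (n + r)) ^ s - (π (r - 1) / ∑' n : ℕ, π (n + (r - 1))) ^ s|) ≤
      ENNReal.ofReal (ε ^ (-s)) * (∑' m : ℕ, ENNReal.ofReal |π (m + 1) ^ s - π m ^ s|) +
        ENNReal.ofReal (s * ε ^ (-1 - s) * (⨆ m : ℕ, π m) ^ s) :=
  variation_of_normalized_weights_le_general π hpos hsum s hs ε hε0 N₀ htail
end

section
/- Suppose v : [0,1] → ℝ is a function, s > 0, C > 0, β > 0 satisfy |v(λ) − v(λ')| ≤ C|λ^s − λ'^s| for all λ, λ' ∈ [0,β). Let π be a probability distribution on ℕ* and ε ∈ (0,1) with sup_m π_m < εβ, and let N_0 := max{N ≥ 1 : ∑_{m≥N+1} π_m ≥ ε}. Then λ_r := π_{r+1}/∑_{m≥r+1}π_m satisfies λ_r < β for all 0 ≤ r ≤ N_0, and ∑_{r=1}^{N_0} |v(λ_r) − v(λ_{r−1})| ≤ C(ε^{−s} + s·ε^{−1−s})·I_s(π). -/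
/-!
With `π` indexed from `0`, write `T r = ∑' n, π (n + r)` for the tail sums and
`λ r = π r / T r`, so that `T r - T (r + 1) = π r` and `T r ≥ ε` for `r ≤ N₀`. Then `λ r < β`
because `π r < ε β ≤ T r β`, and the Hölder bound on `v` reduces the variation to
`∑ |λ (r+1)^s - λ r^s|`. Each such term splits as
`(π (r+1)^s - π r^s) T (r+1)^(-s) + π r^s (T (r+1)^(-s) - T r^(-s))`:
the first part is at most `ε^(-s)` times a term of `I_s(π)`, and by the mean value theorem the
second is at most `s ε^(-1-s) π r^s π r`. Since `π m^s → 0`, telescoping gives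
`π m^s ≤ I_s(π)`, and `∑ π r ≤ 1` finishes the estimate.
-/

open Finset Filter Topology

lemma rpow_neg_sub_rpow_neg_le {s ε A B : ℝ} (hs : 0 ≤ s) (hε : 0 < ε) (hA : ε ≤ A)
    (hAB : A ≤ B) : A ^ (-s) - B ^ (-s) ≤ s * ε ^ (-1 - s) * (B - A) := by
  rcases hAB.eq_or_lt with rfl | hAB
  · simp
  have hA0 : 0 < A := hε.trans_le hA
  obtain ⟨c, hc, hslope⟩ := exists_hasDerivAt_eq_slope (fun x => x ^ (-s))
      (fun x => -s * x ^ (-s - 1)) hAB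
      (fun x hx => (Real.continuousAt_rpow_const x (-s)
        (Or.inl (hA0.trans_le hx.1).ne')).continuousWithinAt)
      (fun x hx => Real.hasDerivAt_rpow_const (Or.inl (hA0.trans hx.1).ne'))
  rw [eq_div_iff (sub_ne_zero.mpr hAB.ne')] at hslope
  have hcε : c ^ (-1 - s) ≤ ε ^ (-1 - s) :=
    Real.rpow_le_rpow_of_nonpos hε (hA.trans hc.1.le) (by linarith)
  calc A ^ (-s) - B ^ (-s) = s * c ^ (-1 - s) * (B - A) := by
        rw [show -1 - s = -s - 1 by ring]; linear_combination hslope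
    _ ≤ s * ε ^ (-1 - s) * (B - A) := by gcongr

lemma abs_div_rpow_sub_div_rpow_le {s ε a b A B : ℝ} (hs : 0 ≤ s) (hε : 0 < ε) (ha : 0 ≤ a)
    (hb : 0 ≤ b) (hA : ε ≤ A) (hAB : A ≤ B) :
    |(a / A) ^ s - (b / B) ^ s| ≤
      ε ^ (-s) * |a ^ s - b ^ s| + s * ε ^ (-1 - s) * (b ^ s * (B - A)) := by
  have hA0 : 0 < A := hε.trans_le hA
  have hB0 : 0 < B := hA0.trans_le hAB
  have hdiv : ∀ {x X : ℝ}, 0 ≤ x → 0 < X → (x / X) ^ s = x ^ s * X ^ (-s) := fun hx hX => by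
    rw [Real.div_rpow hx hX.le, Real.rpow_neg hX.le, div_eq_mul_inv]
  have hbs : 0 ≤ b ^ s := Real.rpow_nonneg hb s
  have hAε : A ^ (-s) ≤ ε ^ (-s) := Real.rpow_le_rpow_of_nonpos hε hA (by linarith)
  have hBA : B ^ (-s) ≤ A ^ (-s) := Real.rpow_le_rpow_of_nonpos hA0 hAB (by linarith)
  rw [hdiv ha hA0, hdiv hb hB0,
    show a ^ s * A ^ (-s) - b ^ s * B ^ (-s)
      = (a ^ s - b ^ s) * A ^ (-s) + b ^ s * (A ^ (-s) - B ^ (-s)) by ring]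
  calc _ ≤ |(a ^ s - b ^ s) * A ^ (-s)| + |b ^ s * (A ^ (-s) - B ^ (-s))| :=
        abs_add_le _ _
    _ = |a ^ s - b ^ s| * A ^ (-s) + b ^ s * (A ^ (-s) - B ^ (-s)) := by
      rw [abs_mul, abs_mul, abs_of_nonneg hbs, abs_of_pos (Real.rpow_pos_of_pos hA0 _),
        abs_of_nonneg (sub_nonneg.mpr hBA)]
    _ ≤ |a ^ s - b ^ s| * ε ^ (-s) + b ^ s * (s * ε ^ (-1 - s) * (B - A)) := by
      gcongr
      exact rpow_neg_sub_rpow_neg_le hs hε hA hAB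
    _ = _ := by ring

lemma abs_le_tsum_abs_sub_succ {f : ℕ → ℝ} (hf : Tendsto f atTop (𝓝 0))
    (hd : Summable fun m => |f (m + 1) - f m|) (n : ℕ) :
    |f n| ≤ ∑' m, |f (m + 1) - f m| := by
  calc |f n| = dist (f n) 0 := (Real.dist_0_eq_abs _).symm
    _ ≤ ∑' m, |f (n + m + 1) - f (n + m)| :=
      dist_le_tsum_of_dist_le_of_tendsto _ (fun k => (Real.dist_eq _ _).trans_le
        (abs_sub_comm _ _).le) hd hf n
    _ ≤ ∑' m, |f (m + 1) - f m| :=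
      tsum_comp_le_tsum_of_inj hd (fun _ => abs_nonneg _) (add_right_injective n)

lemma sum_Icc_one_eq_sum_range {M : Type*} [AddCommMonoid M] (f : ℕ → M) (N : ℕ) :
    ∑ r ∈ Icc 1 N, f r = ∑ i ∈ range N, f (i + 1) := by
  rw [← Ico_add_one_right_eq_Icc, sum_Ico_eq_sum_range]
  simp [add_comm]

lemma tsum_nat_add_eq_add_tsum_nat_add_succ {π : ℕ → ℝ} (hπ : Summable π) (r : ℕ) :
    ∑' n, π (n + r) = π r + ∑' n, π (n + (r + 1)) := by
  rw [((summable_nat_add_iff r).mpr hπ).tsum_eq_zero_add]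
  simp only [zero_add, add_right_comm _ 1, add_assoc]

lemma antitone_tsum_nat_add {π : ℕ → ℝ} (hpos : ∀ m, 0 ≤ π m) (hπ : Summable π) :
    Antitone fun r => ∑' n, π (n + r) :=
  antitone_nat_of_succ_le fun r => by
    rw [tsum_nat_add_eq_add_tsum_nat_add_succ hπ r]; linarith [hpos r]

section Impatience

variable {s : ℝ} {π : ℕ → ℝ}

lemma rpow_le_tsum_abs_sub_rpow (hs : 0 < s) (hπ : Summable π)
    (hI : Summable fun m => |π (m + 1) ^ s - π m ^ s|) (m : ℕ) :
    π m ^ s ≤ ∑' m, |π (m + 1) ^ s - π m ^ s| := by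
  have hlim : Tendsto (fun m => π m ^ s) atTop (𝓝 0) := by
    simpa [Function.comp_def, Real.zero_rpow hs.ne'] using
      ((Real.continuousAt_rpow_const 0 s (Or.inr hs.le)).tendsto.comp hπ.tendsto_atTop_zero)
  exact (le_abs_self _).trans (abs_le_tsum_abs_sub_succ hlim hI m)

lemma sum_rpow_mul_le_tsum_abs_sub_rpow (hs : 0 < s) (hpos : ∀ m, 0 ≤ π m) (hsum : HasSum π 1)
    (hI : Summable fun m => |π (m + 1) ^ s - π m ^ s|) (t : Finset ℕ) :
    ∑ i ∈ t, π i ^ s * π i ≤ ∑' m, |π (m + 1) ^ s - π m ^ s| := by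
  set I := ∑' m, |π (m + 1) ^ s - π m ^ s|
  calc ∑ i ∈ t, π i ^ s * π i ≤ ∑ i ∈ t, I * π i :=
        sum_le_sum fun i _ => by
          gcongr
          exacts [hpos i, rpow_le_tsum_abs_sub_rpow hs hsum.summable hI i]
    _ = I * ∑ i ∈ t, π i := (mul_sum _ _ _).symm
    _ ≤ I * 1 := by
      gcongr
      exact sum_le_hasSum t (fun i _ => hpos i) hsum
    _ = I := mul_one I

lemma sum_range_abs_sub_rpow_div_tsum_nat_add_le {ε : ℝ} {N : ℕ} (hs : 0 < s) (hε : 0 < ε)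
    (hpos : ∀ m, 0 ≤ π m) (hsum : HasSum π 1) (hN : ε ≤ ∑' n, π (n + N))
    (hI : Summable fun m => |π (m + 1) ^ s - π m ^ s|) :
    ∑ i ∈ range N,
        |(π (i + 1) / ∑' n, π (n + (i + 1))) ^ s - (π i / ∑' n, π (n + i)) ^ s| ≤
      (ε ^ (-s) + s * ε ^ (-1 - s)) * ∑' m, |π (m + 1) ^ s - π m ^ s| := by
  set T := fun r => ∑' n, π (n + r)
  set I := ∑' m, |π (m + 1) ^ s - π m ^ s|
  have hT := antitone_tsum_nat_add hpos hsum.summable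
  have hterm : ∀ i ∈ range N, |(π (i + 1) / T (i + 1)) ^ s - (π i / T i) ^ s| ≤
      ε ^ (-s) * |π (i + 1) ^ s - π i ^ s| + s * ε ^ (-1 - s) * (π i ^ s * π i) := by
    intro i hi
    have hstep : T i - T (i + 1) = π i := by
      simp only [T, tsum_nat_add_eq_add_tsum_nat_add_succ hsum.summable i]; ring
    have h := abs_div_rpow_sub_div_rpow_le hs.le hε (hpos (i + 1)) (hpos i)
      (hN.trans (hT (mem_range.mp hi))) (hT (i.le_add_right 1))
    rwa [hstep] at h
  calc _ ≤ ∑ i ∈ range N,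
        (ε ^ (-s) * |π (i + 1) ^ s - π i ^ s| + s * ε ^ (-1 - s) * (π i ^ s * π i)) :=
        sum_le_sum hterm
    _ = ε ^ (-s) * ∑ i ∈ range N, |π (i + 1) ^ s - π i ^ s| +
        s * ε ^ (-1 - s) * ∑ i ∈ range N, π i ^ s * π i := by
      rw [sum_add_distrib, mul_sum, mul_sum]
    _ ≤ ε ^ (-s) * I + s * ε ^ (-1 - s) * I := by
      gcongr
      · exact hI.sum_le_tsum _ fun _ _ => abs_nonneg _
      · exact sum_rpow_mul_le_tsum_abs_sub_rpow hs hpos hsum hI _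
    _ = _ := by ring

end Impatience

lemma ofReal_le_ofReal_mul_tsum_ofReal {ι : Type*} {x c : ℝ} {g : ι → ℝ} (hc : 0 < c)
    (hg : ∀ i, 0 ≤ g i) (h : Summable g → x ≤ c * ∑' i, g i) :
    ENNReal.ofReal x ≤ ENNReal.ofReal c * ∑' i, ENNReal.ofReal (g i) := by
  by_cases htop : ∑' i, ENNReal.ofReal (g i) = ⊤
  · rw [htop, ENNReal.mul_top (by simpa using hc)]
    exact le_top
  have hsum : Summable g := by
    simpa [ENNReal.toReal_ofReal (hg _)] using ENNReal.summable_toReal htop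
  rw [← ENNReal.ofReal_tsum_of_nonneg hg hsum, ← ENNReal.ofReal_mul hc.le]
  exact ENNReal.ofReal_le_ofReal (h hsum)

theorem variation_of_values_le_general (v : ℝ → ℝ) (s C β : ℝ) (hs : 0 < s) (hC : 0 < C)
    (hβ : 0 < β)
    (hv : ∀ x y : ℝ, 0 ≤ x → x < β → 0 ≤ y → y < β → |v x - v y| ≤ C * |x ^ s - y ^ s|)
    (π : ℕ → ℝ) (hpos : ∀ m, 0 ≤ π m) (hsum : HasSum π 1)
    (ε : ℝ) (hε0 : 0 < ε) (hsup : (⨆ m : ℕ, π m) < ε * β)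
    (N₀ : ℕ) (hmem : ε ≤ ∑' n : ℕ, π (n + N₀)) :
    (∀ r ≤ N₀, π r / (∑' n : ℕ, π (n + r)) < β) ∧
    ENNReal.ofReal (∑ r ∈ Finset.Icc 1 N₀,
        |v (π r / ∑' n : ℕ, π (n + r)) - v (π (r - 1) / ∑' n : ℕ, π (n + (r - 1)))|) ≤
      ENNReal.ofReal (C * (ε ^ (-s) + s * ε ^ (-1 - s))) *
        ∑' m : ℕ, ENNReal.ofReal |π (m + 1) ^ s - π m ^ s| := by
  set lam : ℕ → ℝ := fun r => π r / ∑' n, π (n + r)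
  have hbdd : BddAbove (Set.range π) :=
    ⟨1, Set.forall_mem_range.mpr fun m => le_hasSum hsum m fun j _ => hpos j⟩
  have hlamβ : ∀ r ≤ N₀, lam r < β := fun r hr => by
    have hεT := hmem.trans (antitone_tsum_nat_add hpos hsum.summable hr)
    rw [div_lt_iff₀ (hε0.trans_le hεT)]
    nlinarith [le_ciSup hbdd r]
  have hlam0 : ∀ r, 0 ≤ lam r := fun r => div_nonneg (hpos r) (tsum_nonneg fun _ => hpos _)
  refine ⟨hlamβ, ofReal_le_ofReal_mul_tsum_ofReal (by positivity) (fun _ => abs_nonneg _)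
    fun hI => ?_⟩
  rw [sum_Icc_one_eq_sum_range]
  simp only [Nat.add_sub_cancel]
  calc _ ≤ ∑ i ∈ range N₀, C * |lam (i + 1) ^ s - lam i ^ s| := sum_le_sum fun i hi =>
        hv _ _ (hlam0 _) (hlamβ _ (mem_range.mp hi))
          (hlam0 _) (hlamβ _ (mem_range.mp hi).le)
    _ = C * ∑ i ∈ range N₀, |lam (i + 1) ^ s - lam i ^ s| := (mul_sum _ _ _).symm
    _ ≤ C * ((ε ^ (-s) + s * ε ^ (-1 - s)) * ∑' m, |π (m + 1) ^ s - π m ^ s|) := by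
      gcongr
      exact sum_range_abs_sub_rpow_div_tsum_nat_add_le hs hε0 hpos hsum hmem hI
    _ = _ := by ring

/-- Hölder-type variation bound for the discounted values (proof of Theorem 2.7).
`v` satisfies `|v λ - v λ'| ≤ C |λ^s - λ'^s|` on `[0, β)`; `π m` is the weight of stage
`m+1`, with tail sums `T r := ∑' n, π (n + r)`, normalized weights `λ_r := π_{r+1}/T_r`, and
`N₀ := max {N ≥ 1 : T N ≥ ε}`.  If `sup_m π_m < ε β`, then `λ_r < β` for all `r ≤ N₀` and
`∑_{r=1}^{N₀} |v(λ_r) - v(λ_{r-1})| ≤ C (ε^{-s} + s ε^{-1-s}) I_s(π)` (impatience in `ℝ≥0∞`). -/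
theorem variation_of_values_le (v : ℝ → ℝ) (s C β : ℝ) (hs : 0 < s) (hC : 0 < C)
    (hβ : 0 < β)
    (hv : ∀ x y : ℝ, 0 ≤ x → x < β → 0 ≤ y → y < β → |v x - v y| ≤ C * |x ^ s - y ^ s|)
    (π : ℕ → ℝ) (hpos : ∀ m, 0 ≤ π m) (hsum : HasSum π 1)
    (ε : ℝ) (hε0 : 0 < ε) (hε1 : ε < 1) (hsup : (⨆ m : ℕ, π m) < ε * β)
    (N₀ : ℕ) (hN₀ : 1 ≤ N₀) (hmem : ε ≤ ∑' n : ℕ, π (n + N₀))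
    (hmax : ∀ N, N₀ < N → (∑' n : ℕ, π (n + N)) < ε) :
    (∀ r ≤ N₀, π r / (∑' n : ℕ, π (n + r)) < β) ∧
    ENNReal.ofReal (∑ r ∈ Finset.Icc 1 N₀,
        |v (π r / ∑' n : ℕ, π (n + r)) - v (π (r - 1) / ∑' n : ℕ, π (n + (r - 1)))|) ≤
      ENNReal.ofReal (C * (ε ^ (-s) + s * ε ^ (-1 - s))) *
        ∑' m : ℕ, ENNReal.ofReal |π (m + 1) ^ s - π m ^ s| :=
  variation_of_values_le_general v s C β hs hC hβ hv π hpos hsum ε hε0 hsup N₀ hmem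
end
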